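/- arXiv:2503.00313 — 2 statements merged into one kernel-verified Lean document; each statement's English description precedes it below -/
import Mathlib

section
/- For a Hurwitz matrix M (all eigenvalues with negative real part), ‖exp(tM)‖ → 0 as t → ∞. -/
open Matrix Filter NormedSpace

lemma aux_real_lim (c : ℝ) (hc : c < 0) (k : ℕ) :
    Tendsto (fun t : ℝ => Real.exp (c * t) * t ^ k) atTop (nhds 0) := by
  have h1 : Tendsto (fun t : ℝ => (-c) * t) atTop atTop :=
    Tendsto.const_mul_atTop (by linarith) tendsto_id
  have h2 := (Real.tendsto_pow_mul_exp_neg_atTop_nhds_zero k).comp h1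
  have h3 := h2.const_mul (((-c) ^ k)⁻¹)
  rw [mul_zero] at h3
  refine h3.congr fun t => ?_
  have hck : (-c) ^ k ≠ 0 := pow_ne_zero _ (by linarith)
  simp only [Function.comp]
  rw [mul_pow, neg_mul, neg_neg]
  field_simp

lemma aux_scalar_lim (μ : ℂ) (hμ : μ.re < 0) (k : ℕ) :
    Tendsto (fun t : ℝ => Complex.exp (t * μ) * (((k.factorial : ℂ))⁻¹ * (t : ℂ) ^ k))
      atTop (nhds 0) := by
  rw [tendsto_zero_iff_norm_tendsto_zero]
  have hg : Tendsto (fun t : ℝ => Real.exp (μ.re * t) * t ^ k * ((k.factorial : ℝ))⁻¹)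
      atTop (nhds 0) := by
    simpa using (aux_real_lim μ.re hμ k).mul_const ((k.factorial : ℝ))⁻¹
  refine hg.congr' ?_
  filter_upwards [eventually_ge_atTop (0 : ℝ)] with t ht
  rw [norm_mul, norm_mul, Complex.norm_exp]
  simp [Complex.re_ofReal_mul, abs_of_nonneg ht]
  ring_nf

lemma aux_vec {n : ℕ} (M : Matrix (Fin n) (Fin n) ℂ)
    (hM : ∀ μ ∈ spectrum ℂ M, μ.re < 0) (x : Fin n → ℂ) :
    Tendsto (fun t : ℝ => NormedSpace.exp (t • M) *ᵥ x) atTop (nhds 0) := by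
  letI : SeminormedRing (Matrix (Fin n) (Fin n) ℂ) := Matrix.linftyOpSemiNormedRing
  letI : NormedRing (Matrix (Fin n) (Fin n) ℂ) := Matrix.linftyOpNormedRing
  letI : NormedAlgebra ℂ (Matrix (Fin n) (Fin n) ℂ) := Matrix.linftyOpNormedAlgebra
  set f : Module.End ℂ (Fin n → ℂ) := Matrix.toLinAlgEquiv' M with hf
  have hx : x ∈ ⨆ μ : ℂ, f.maxGenEigenspace μ := by
    rw [Module.End.iSup_maxGenEigenspace_eq_top f]; trivial
  refine Submodule.iSup_induction (motive := fun y : Fin n → ℂ =>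
      Tendsto (fun t : ℝ => NormedSpace.exp (t • M) *ᵥ y) atTop (nhds 0)) _ hx ?_ ?_ ?_
  · -- main case
    intro μ y hy
    by_cases hy0 : y = 0
    · simp [hy0, Matrix.mulVec_zero, tendsto_const_nhds]
    obtain ⟨K, hK⟩ := (Module.End.mem_maxGenEigenspace f μ y).mp hy
    -- μ is in the spectrum of M
    have hμM : μ ∈ spectrum ℂ M := by
      have hgen : f.HasGenEigenvalue μ K := by
        rw [Module.End.hasGenEigenvalue_iff]
        refine Submodule.ne_bot_iff _ |>.mpr ⟨y, ?_, hy0⟩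
        exact Module.End.mem_genEigenspace.mpr ⟨K, le_refl _, LinearMap.mem_ker.mpr hK⟩
      have hev : f.HasEigenvalue μ := Module.End.hasEigenvalue_of_hasGenEigenvalue hgen
      have := Module.End.hasEigenvalue_iff_mem_spectrum.mp hev
      rwa [hf, AlgEquiv.spectrum_eq Matrix.toLinAlgEquiv' M] at this
    have hμre : μ.re < 0 := hM μ hμM
    set N : Matrix (Fin n) (Fin n) ℂ := M - μ • 1 with hN
    -- translate hK to matrices
    have hKM : N ^ K *ᵥ y = 0 := by
      have : (f - μ • 1) ^ K = Matrix.toLinAlgEquiv' (N ^ K) := by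
        rw [map_pow, hf, hN, map_sub]
        congr 1
        rw [_root_.map_smul, _root_.map_one]
      rw [this, Matrix.toLinAlgEquiv'_apply] at hK
      exact hK
    have hKM' : ∀ k, K ≤ k → N ^ k *ᵥ y = 0 := by
      intro k hk
      have : N ^ k = N ^ (k - K) * N ^ K := by rw [← pow_add]; congr 1; omega
      rw [this, ← Matrix.mulVec_mulVec, hKM, Matrix.mulVec_zero]
    -- the key formula
    have hform : ∀ t : ℝ, NormedSpace.exp (t • M) *ᵥ y =
        ∑ k ∈ Finset.range K,
          (Complex.exp (t * μ) * (((k.factorial : ℂ))⁻¹ * (t : ℂ) ^ k)) • (N ^ k *ᵥ y) := by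
      intro t
      have hsplit : t • M = (t : ℂ) • N + ((t : ℂ) * μ) • 1 := by
        rw [hN, smul_sub, smul_smul, sub_add_cancel, Complex.coe_smul]
      have hcomm : Commute ((t : ℂ) • N) (((t : ℂ) * μ) • 1) :=
        ((Commute.one_right N).smul_right ((t : ℂ) * μ)).smul_left (t : ℂ)
      have hexp1 : NormedSpace.exp ((((t : ℂ) * μ) • 1 : Matrix (Fin n) (Fin n) ℂ))
          = Complex.exp (t * μ) • (1 : Matrix (Fin n) (Fin n) ℂ) := by
        rw [← Algebra.algebraMap_eq_smul_one]
        erw [← NormedSpace.algebraMap_exp_comm]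
        rw [← Complex.exp_eq_exp_ℂ,
          Algebra.algebraMap_eq_smul_one]
      have hmain : NormedSpace.exp (t • M) = Complex.exp (t * μ) • NormedSpace.exp ((t : ℂ) • N) := by
        rw [hsplit]
        erw [NormedSpace.exp_add_of_commute_of_mem_ball (𝕂 := ℂ) hcomm (by simp [expSeries_radius_eq_top]) (by simp [expSeries_radius_eq_top]), hexp1]
        rw [mul_smul_comm, mul_one]
        rfl
      -- the series applied to y
      let L : Matrix (Fin n) (Fin n) ℂ →ₗ[ℂ] (Fin n → ℂ) :=
        { toFun := fun A => A *ᵥ y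
          map_add' := fun A B => Matrix.add_mulVec A B y
          map_smul' := fun c A => Matrix.smul_mulVec c A y }
      have hLc : Continuous L := LinearMap.continuous_of_finiteDimensional L
      have hLk : ∀ k : ℕ, L (((k.factorial : ℂ))⁻¹ • ((t : ℂ) • N) ^ k)
          = (((k.factorial : ℂ))⁻¹ * (t : ℂ) ^ k) • (N ^ k *ᵥ y) := by
        intro k
        rw [_root_.map_smul, smul_pow]
        show ((k.factorial : ℂ))⁻¹ • (((t : ℂ) ^ k • N ^ k) *ᵥ y) = _
        rw [Matrix.smul_mulVec, smul_smul]
      have hsum2 : HasSum (fun k : ℕ => L (((k.factorial : ℂ))⁻¹ • ((t : ℂ) • N) ^ k))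
          (L (NormedSpace.exp ((t : ℂ) • N))) :=
        (exp_series_hasSum_exp' (𝕂 := ℂ) ((t : ℂ) • N)).map L.toAddMonoidHom hLc
      have hzero : ∀ k ∉ Finset.range K,
          L (((k.factorial : ℂ))⁻¹ • ((t : ℂ) • N) ^ k) = 0 := by
        intro k hk
        rw [hLk k, hKM' k (by simpa using hk), smul_zero]
      have hfin : HasSum (fun k : ℕ => L (((k.factorial : ℂ))⁻¹ • ((t : ℂ) • N) ^ k))
          (∑ k ∈ Finset.range K, L (((k.factorial : ℂ))⁻¹ • ((t : ℂ) • N) ^ k)) :=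
        hasSum_sum_of_ne_finset_zero hzero
      have hval : L (NormedSpace.exp ((t : ℂ) • N))
          = ∑ k ∈ Finset.range K, L (((k.factorial : ℂ))⁻¹ • ((t : ℂ) • N) ^ k) :=
        hsum2.unique hfin
      calc NormedSpace.exp (t • M) *ᵥ y
          = Complex.exp (t * μ) • (NormedSpace.exp ((t : ℂ) • N) *ᵥ y) := by
            rw [hmain, Matrix.smul_mulVec]
        _ = Complex.exp (t * μ) •
              ∑ k ∈ Finset.range K, L (((k.factorial : ℂ))⁻¹ • ((t : ℂ) • N) ^ k) := by
            rw [← hval]; rfl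
        _ = _ := by
            rw [Finset.smul_sum]
            refine Finset.sum_congr rfl fun k _ => ?_
            rw [hLk k, smul_smul]
    rw [show (0 : Fin n → ℂ) = ∑ k ∈ Finset.range K, (0 : Fin n → ℂ) by simp] at *
    refine Tendsto.congr (fun t => (hform t).symm) ?_
    refine tendsto_finset_sum _ fun k _ => ?_
    have := (aux_scalar_lim μ hμre k).smul_const (N ^ k *ᵥ y)
    rwa [zero_smul] at this
  · simp [Matrix.mulVec_zero, tendsto_const_nhds]
  · intro y z hy hz
    have := hy.add hz
    rw [add_zero] at this
    refine this.congr fun t => ?_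
    rw [Matrix.mulVec_add]

attribute [local instance] Matrix.normedAddCommGroup Matrix.normedSpace

theorem stmt_15 (n : ℕ) (M : Matrix (Fin n) (Fin n) ℂ)
    (hM : ∀ μ ∈ spectrum ℂ M, μ.re < 0) :
    Tendsto (fun t : ℝ => ‖NormedSpace.exp (t • M)‖) atTop (nhds 0) := by
  have hentry : ∀ i j : Fin n, Tendsto (fun t : ℝ => ‖NormedSpace.exp (t • M) i j‖) atTop (nhds 0) := by
    intro i j
    have h1 := aux_vec M hM (Pi.single j 1)
    have h2 : Tendsto (fun t : ℝ => (NormedSpace.exp (t • M) *ᵥ Pi.single j 1) i) atTop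
        (nhds ((0 : Fin n → ℂ) i)) := ((continuous_apply i).tendsto _).comp h1
    have h3 : Tendsto (fun t : ℝ => NormedSpace.exp (t • M) i j) atTop (nhds 0) := by
      simpa [Matrix.mulVec_single_one] using h2
    simpa using h3.norm
  have hb : Tendsto (fun t : ℝ => ∑ i : Fin n, ∑ j : Fin n, ‖NormedSpace.exp (t • M) i j‖)
      atTop (nhds 0) := by
    rw [show (0 : ℝ) = ∑ _i : Fin n, ∑ _j : Fin n, (0 : ℝ) by simp]
    exact tendsto_finset_sum _ fun i _ => tendsto_finset_sum _ fun j _ => hentry i j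
  refine squeeze_zero (fun t => norm_nonneg _) (fun t => ?_) hb
  rw [Matrix.norm_le_iff (by positivity)]
  intro i j
  calc ‖NormedSpace.exp (t • M) i j‖ ≤ ∑ j' : Fin n, ‖NormedSpace.exp (t • M) i j'‖ :=
        Finset.single_le_sum (fun _ _ => norm_nonneg _) (Finset.mem_univ j)
    _ ≤ ∑ i' : Fin n, ∑ j' : Fin n, ‖NormedSpace.exp (t • M) i' j'‖ :=
        Finset.single_le_sum (fun _ _ => Finset.sum_nonneg fun _ _ => norm_nonneg _)
          (Finset.mem_univ i)
end

section
/- If e^{At} K e^{Bᵀt} is constant in t and both A and B are Hurwitz, then K = 0. -/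
open Matrix NormedSpace Polynomial

-- The spectrum of a transposed matrix equals the spectrum of the matrix.
lemma spectrum_transpose_aux {n : ℕ} (B : Matrix (Fin n) (Fin n) ℂ) :
    spectrum ℂ Bᵀ = spectrum ℂ B := by
  ext μ
  simp only [spectrum.mem_iff, not_iff_not, Matrix.isUnit_iff_isUnit_det]
  have : (algebraMap ℂ (Matrix (Fin n) (Fin n) ℂ) μ - Bᵀ) =
      (algebraMap ℂ (Matrix (Fin n) (Fin n) ℂ) μ - B)ᵀ := by
    rw [Matrix.transpose_sub]
    congr 1
    simp [Matrix.algebraMap_eq_diagonal]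
  rw [this, Matrix.det_transpose]

-- Roots of the characteristic polynomial lie in the spectrum.
lemma root_charpoly_mem_spectrum_aux {n : ℕ} (A : Matrix (Fin n) (Fin n) ℂ) (μ : ℂ)
    (h : A.charpoly.IsRoot μ) : μ ∈ spectrum ℂ A := by
  rw [spectrum.mem_iff]
  rw [Matrix.isUnit_iff_isUnit_det]
  have hdet : (algebraMap ℂ (Matrix (Fin n) (Fin n) ℂ) μ - A).det = 0 := by
    have := h
    rw [Polynomial.IsRoot, Matrix.charpoly, _root_.eval_det,
      Matrix.matPolyEquiv_charmatrix] at this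
    simpa [Matrix.scalar, Matrix.algebraMap_eq_diagonal] using this
  rw [hdet]
  exact not_isUnit_zero

theorem stmt_16 (n : ℕ) (A B K : Matrix (Fin n) (Fin n) ℂ)
    (hA : ∀ μ ∈ spectrum ℂ A, μ.re < 0)
    (hB : ∀ μ ∈ spectrum ℂ B, μ.re < 0)
    (hconst : ∀ t : ℝ, 0 ≤ t → exp (t • A) * K * exp (t • Bᵀ) = K) :
    K = 0 := by
  classical
  letI : SeminormedRing (Matrix (Fin n) (Fin n) ℂ) := Matrix.linftyOpSemiNormedRing
  letI : NormedRing (Matrix (Fin n) (Fin n) ℂ) := Matrix.linftyOpNormedRing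
  letI : NormedAlgebra ℝ (Matrix (Fin n) (Fin n) ℂ) := Matrix.linftyOpNormedAlgebra
  have hexp : (exp : Matrix (Fin n) (Fin n) ℂ → Matrix (Fin n) (Fin n) ℂ) = exp :=
    rfl
  -- derivative of the constant-in-t function at t = 1
  have key : HasDerivAt (fun t : ℝ => exp (t • A) * K * exp (t • Bᵀ))
      ((A * exp ((1:ℝ) • A)) * K * exp ((1:ℝ) • Bᵀ)
        + exp ((1:ℝ) • A) * K * (exp ((1:ℝ) • Bᵀ) * Bᵀ)) 1 := by
    rw [hexp]
    have h1 : HasDerivAt (fun u : ℝ => exp (u • A)) (A * exp ((1:ℝ) • A)) 1 :=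
      hasDerivAt_exp_smul_const' A 1
    have h2 : HasDerivAt (fun u : ℝ => exp (u • Bᵀ)) (exp ((1:ℝ) • Bᵀ) * Bᵀ) 1 :=
      hasDerivAt_exp_smul_const Bᵀ 1
    have h3 := (h1.mul_const K).mul h2
    simp only [mul_assoc, Pi.mul_def] at h3 ⊢
    exact h3
  have heq : (fun t : ℝ => exp (t • A) * K * exp (t • Bᵀ)) =ᶠ[nhds (1:ℝ)]
      fun _ => K := by
    filter_upwards [Ioi_mem_nhds (by norm_num : (0:ℝ) < 1)] with t ht
    exact hconst t (le_of_lt ht)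
  have hzero : HasDerivAt (fun t : ℝ => exp (t • A) * K * exp (t • Bᵀ)) 0 1 :=
    (hasDerivAt_const (1:ℝ) K).congr_of_eventuallyEq heq
  have hder := key.unique hzero
  have h1K : exp ((1:ℝ) • A) * K * exp ((1:ℝ) • Bᵀ) = K := hconst 1 zero_le_one
  -- Sylvester equation
  have hsyl : A * K + K * Bᵀ = 0 := by
    calc A * K + K * Bᵀ
        = A * (exp ((1:ℝ) • A) * K * exp ((1:ℝ) • Bᵀ))
          + (exp ((1:ℝ) • A) * K * exp ((1:ℝ) • Bᵀ)) * Bᵀ := by rw [h1K]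
      _ = (A * exp ((1:ℝ) • A)) * K * exp ((1:ℝ) • Bᵀ)
          + exp ((1:ℝ) • A) * K * (exp ((1:ℝ) • Bᵀ) * Bᵀ) := by
            simp only [mul_assoc]
      _ = 0 := hder
  have hAK : A * K = K * (-Bᵀ) := by
    have := hsyl
    rw [add_eq_zero_iff_eq_neg] at this
    rw [this, mul_neg]
  -- powers
  have hpow : ∀ k : ℕ, A ^ k * K = K * (-Bᵀ) ^ k := by
    intro k
    induction k with
    | zero => simp
    | succ k ih =>
      calc A ^ (k+1) * K = A * (A ^ k * K) := by rw [pow_succ', mul_assoc]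
        _ = A * K * (-Bᵀ) ^ k := by rw [ih, mul_assoc]
        _ = K * (-Bᵀ) * (-Bᵀ) ^ k := by rw [hAK]
        _ = K * (-Bᵀ) ^ (k+1) := by rw [pow_succ', mul_assoc]
  -- polynomials
  have hpoly : ∀ p : Polynomial ℂ, aeval A p * K = K * aeval (-Bᵀ) p := by
    intro p
    rw [Polynomial.aeval_eq_sum_range (R := ℂ) (x := A),
      Polynomial.aeval_eq_sum_range (R := ℂ) (x := -Bᵀ)]
    rw [Finset.sum_mul, Finset.mul_sum]
    exact Finset.sum_congr rfl fun i _ => by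
      rw [smul_mul_assoc, mul_smul_comm, hpow i]
  -- Cayley-Hamilton
  have hCH : K * aeval (-Bᵀ) A.charpoly = 0 := by
    rw [← hpoly, Matrix.aeval_self_charpoly, zero_mul]
  -- the evaluated charpoly is a unit
  have hsplit : A.charpoly =
      ((A.charpoly.roots.map fun μ => X - C μ).toList).prod := by
    rw [Multiset.prod_toList]
    exact Polynomial.Splits.eq_prod_roots_of_monic
      (IsAlgClosed.splits _) A.charpoly_monic
  have hunit : IsUnit (aeval (-Bᵀ) A.charpoly) := by
    rw [hsplit, map_list_prod (aeval (-Bᵀ) : Polynomial ℂ →ₐ[ℂ] _)]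
    apply List.prod_isUnit
    intro m hm
    simp only [List.mem_map] at hm
    obtain ⟨q, hq, rfl⟩ := hm
    rw [Multiset.mem_toList, Multiset.mem_map] at hq
    obtain ⟨μ, hμ, rfl⟩ := hq
    have hμA : μ ∈ spectrum ℂ A :=
      root_charpoly_mem_spectrum_aux A μ
        (Polynomial.isRoot_of_mem_roots hμ)
    have hμre : μ.re < 0 := hA μ hμA
    have : aeval (-Bᵀ) (X - C μ) =
        -(algebraMap ℂ (Matrix (Fin n) (Fin n) ℂ) μ - (-Bᵀ)) := by
      simp [sub_eq_add_neg]
    rw [this, IsUnit.neg_iff]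
    by_contra hcon
    have : μ ∈ spectrum ℂ (-Bᵀ) := spectrum.mem_iff.mpr hcon
    rw [← spectrum.neg_eq, Set.mem_neg, spectrum_transpose_aux] at this
    have := hB _ this
    simp only [Complex.neg_re] at this
    linarith
  rwa [IsUnit.mul_left_eq_zero hunit] at hCH
end
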